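/- The recognizable tree languages are closed under tree concatenation closure: if a ∈ Σ_0 and L ⊆ T_Σ is a recognizable tree language, then the tree concatenation closure L^{*a} is recognizable. -/
import Mathlib


inductive RTree (σ : ℕ → Type) : Type
  | node {k : ℕ} (a : σ k) (ts : Fin k → RTree σ) : RTree σ

def RTree.leaf {σ : ℕ → Type} (a : σ 0) : RTree σ := .node a Fin.elim0

/-- Deterministic bottom-up finite tree automaton. -/
structure DBUA (σ : ℕ → Type) (Q : Type) where
  δ : ∀ k, σ k → (Fin k → Q) → Q
  F : Set Q

def DBUA.run {σ : ℕ → Type} {Q : Type} (M : DBUA σ Q) : RTree σ → Q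
  | .node a ts => M.δ _ a fun i => M.run (ts i)

def DBUA.lang {σ : ℕ → Type} {Q : Type} (M : DBUA σ Q) : Set (RTree σ) :=
  {t | M.run t ∈ M.F}

/-- A tree language is recognizable if it is recognized by some deterministic
bottom-up finite tree automaton with finitely many states. -/
def Recognizable {σ : ℕ → Type} (L : Set (RTree σ)) : Prop :=
  ∃ (Q : Type) (_ : Fintype Q) (M : DBUA σ Q), L = M.lang

/-- `SubstRel g t s` holds iff `s` can be obtained from `t` by replacing each
rank-0 leaf labeled `a` by some tree of `g a` (different occurrences may be
replaced by different trees). -/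
inductive SubstRel {σ : ℕ → Type} (g : σ 0 → Set (RTree σ)) :
    RTree σ → RTree σ → Prop
  | leaf {a : σ 0} {ts : Fin 0 → RTree σ} {s : RTree σ} :
      s ∈ g a → SubstRel g (.node a ts) s
  | node {k : ℕ} {a : σ (k + 1)} {ts ss : Fin (k + 1) → RTree σ} :
      (∀ i, SubstRel g (ts i) (ss i)) → SubstRel g (.node a ts) (.node a ss)

/-- The tree concatenation of a tree language `L` with the languages `g a`
substituted at the rank-0 symbols `a`. -/
def treeConcat {σ : ℕ → Type} (L : Set (RTree σ)) (g : σ 0 → Set (RTree σ)) :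
    Set (RTree σ) :=
  {s | ∃ t ∈ L, SubstRel g t s}

/-- The binary tree concatenation `L₁ ·_a L₂`: replace every occurrence of the
leaf `a` in trees of `L₁` by (possibly different) trees of `L₂`. -/
def concatAt {σ : ℕ → Type} (a : σ 0) (L₁ L₂ : Set (RTree σ)) : Set (RTree σ) :=
  treeConcat L₁ fun b => {s | (b = a ∧ s ∈ L₂) ∨ (b ≠ a ∧ s = RTree.leaf b)}

/-- The approximations `X_n` of the tree concatenation closure:
`X₀ = {a}` and `X_{n+1} = X_n ·_a (L ∪ {a})`. -/
def closIter {σ : ℕ → Type} (a : σ 0) (L : Set (RTree σ)) : ℕ → Set (RTree σ)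
  | 0 => {RTree.leaf a}
  | n + 1 => concatAt a (closIter a L n) (L ∪ {RTree.leaf a})

/-- The tree concatenation closure `L^{*a} = ⋃_n X_n`. -/
def concatClosure {σ : ℕ → Type} (a : σ 0) (L : Set (RTree σ)) : Set (RTree σ) :=
  ⋃ n, closIter a L n

open Classical
namespace TCC
variable {σ : ℕ → Type}

def g (a : σ 0) (X : Set (RTree σ)) : σ 0 → Set (RTree σ) :=
  fun b => {s | (b = a ∧ s ∈ X) ∨ (b ≠ a ∧ s = RTree.leaf b)}

lemma concatAt_eq (a : σ 0) (L₁ L₂ : Set (RTree σ)) :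
    concatAt a L₁ L₂ = {s | ∃ t ∈ L₁, SubstRel (g a L₂) t s} := rfl

lemma node_zero_eq_leaf (b : σ 0) (ts : Fin 0 → RTree σ) :
    RTree.node b ts = RTree.leaf b := by
  unfold RTree.leaf; congr 1; funext i; exact i.elim0

lemma substRel_mono {g₁ g₂ : σ 0 → Set (RTree σ)} (h : ∀ b, g₁ b ⊆ g₂ b)
    {t s : RTree σ} (hs : SubstRel g₁ t s) : SubstRel g₂ t s := by
  induction hs with
  | leaf hm => exact .leaf (h _ hm)
  | node _ ih => exact .node ih

lemma substRel_refl {g₀ : σ 0 → Set (RTree σ)} (h : ∀ b, RTree.leaf b ∈ g₀ b)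
    (t : RTree σ) : SubstRel g₀ t t := by
  induction t with
  | @node k b ts ih =>
    match k, b, ts, ih with
    | 0, b, ts, ih =>
      refine .leaf ?_
      rw [node_zero_eq_leaf]; exact h b
    | k+1, b, ts, ih => exact .node ih
lemma substRel_leaf_inv {g₀ : σ 0 → Set (RTree σ)} {b : σ 0} {ts : Fin 0 → RTree σ}
    {s : RTree σ} (h : SubstRel g₀ (.node b ts) s) : s ∈ g₀ b := by
  cases h with
  | leaf hm => exact hm

lemma substRel_node_inv {g₀ : σ 0 → Set (RTree σ)} {k : ℕ} {b : σ (k+1)}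
    {ts : Fin (k+1) → RTree σ} {s : RTree σ} (h : SubstRel g₀ (.node b ts) s) :
    ∃ ss : Fin (k+1) → RTree σ, s = .node b ss ∧ ∀ i, SubstRel g₀ (ts i) (ss i) := by
  cases h with
  | node hm => exact ⟨_, rfl, hm⟩

/-- If the target is a rank-0 node, the source must be a rank-0 node. -/
lemma substRel_to_leaf_inv {g₀ : σ 0 → Set (RTree σ)} {t : RTree σ} {b : σ 0}
    {ss : Fin 0 → RTree σ} (h : SubstRel g₀ t (.node b ss)) :
    ∃ (b' : σ 0) (ts' : Fin 0 → RTree σ), t = .node b' ts' ∧ RTree.leaf b ∈ g₀ b' := by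
  cases h with
  | @leaf b' ts' s hm => exact ⟨b', ts', rfl, by rwa [node_zero_eq_leaf] at hm⟩

lemma substRel_id {g₀ : σ 0 → Set (RTree σ)} (h : ∀ b, g₀ b ⊆ {RTree.leaf b})
    {t s : RTree σ} (hs : SubstRel g₀ t s) : s = t := by
  induction hs with
  | @leaf b ts s hm => rw [h b hm, node_zero_eq_leaf]
  | node _ ih => exact congrArg _ (funext ih)
lemma substRel_trans {a : σ 0} {A B C : Set (RTree σ)}
    (hA : ∀ v ∈ A, ∀ w, SubstRel (g a B) v w → w ∈ C)
    {t u : RTree σ} (h₁ : SubstRel (g a A) t u) :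
    ∀ {s : RTree σ}, SubstRel (g a B) u s → SubstRel (g a C) t s := by
  induction h₁ with
  | @leaf b ts u hm =>
    intro s h₂
    rcases hm with ⟨hb, hu⟩ | ⟨hb, hu⟩
    · exact .leaf (Or.inl ⟨hb, hA _ hu _ h₂⟩)
    · subst hu
      have := substRel_leaf_inv h₂
      rcases this with ⟨hb', hs⟩ | ⟨hb', hs⟩
      · exact absurd hb' hb
      · exact .leaf (Or.inr ⟨hb, hs⟩)
  | @node k b ts us _ ih =>
    intro s h₂
    obtain ⟨ss, rfl, hss⟩ := substRel_node_inv h₂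
    exact .node fun i => ih i (hss i)

lemma substRel_decomp {a : σ 0} {A B : Set (RTree σ)} {t s : RTree σ}
    (h : SubstRel (g a {u | ∃ v ∈ A, SubstRel (g a B) v u}) t s) :
    ∃ u, SubstRel (g a A) t u ∧ SubstRel (g a B) u s := by
  induction h with
  | @leaf b ts s hm =>
    rcases hm with ⟨hb, v, hv, hvs⟩ | ⟨hb, hs⟩
    · exact ⟨v, .leaf (Or.inl ⟨hb, hv⟩), hvs⟩
    · subst hs
      refine ⟨RTree.leaf b, .leaf (Or.inr ⟨hb, rfl⟩), ?_⟩
      show SubstRel (g a B) (RTree.node b Fin.elim0) (RTree.leaf b)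
      exact .leaf (Or.inr ⟨hb, rfl⟩)
  | @node k b ts ss _ ih =>
    choose us h1 h2 using ih
    exact ⟨.node b us, .node h1, .node h2⟩
variable {a : σ 0} {L : Set (RTree σ)}

lemma g_mono {X Y : Set (RTree σ)} (h : X ⊆ Y) : ∀ b, g a X b ⊆ g a Y b :=
  fun _ _ hm => hm.imp (fun ⟨hb, hx⟩ => ⟨hb, h hx⟩) id

lemma mem_closIter_succ {n : ℕ} {s : RTree σ} :
    s ∈ closIter a L (n+1) ↔ ∃ t ∈ closIter a L n,
      SubstRel (g a (L ∪ {RTree.leaf a})) t s := Iff.rfl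

lemma closIter_succ_self {n : ℕ} : closIter a L n ⊆ closIter a L (n+1) := by
  intro t ht
  exact ⟨t, ht, substRel_refl (fun b => by
    by_cases hb : b = a
    · subst hb; exact Or.inl ⟨rfl, Or.inr rfl⟩
    · exact Or.inr ⟨hb, rfl⟩) t⟩

lemma closIter_mono {n m : ℕ} (h : n ≤ m) : closIter a L n ⊆ closIter a L m := by
  induction h with
  | refl => exact subset_rfl
  | step _ ih => exact ih.trans closIter_succ_self

lemma leaf_mem_closure : RTree.leaf a ∈ concatClosure a L :=
  Set.mem_iUnion.2 ⟨0, rfl⟩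

lemma substRel_closure_exists {t s : RTree σ}
    (h : SubstRel (g a (concatClosure a L)) t s) :
    ∃ n, SubstRel (g a (closIter a L n)) t s := by
  induction h with
  | @leaf b ts s hm =>
    rcases hm with ⟨hb, hu⟩ | ⟨hb, hu⟩
    · obtain ⟨n, hn⟩ := Set.mem_iUnion.1 hu
      exact ⟨n, .leaf (Or.inl ⟨hb, hn⟩)⟩
    · exact ⟨0, .leaf (Or.inr ⟨hb, hu⟩)⟩
  | @node k b ts ss _ ih =>
    choose f hf using ih
    refine ⟨Finset.univ.sup f, .node fun i => ?_⟩
    exact substRel_mono (g_mono (closIter_mono (Finset.le_sup (Finset.mem_univ i)))) (hf i)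
lemma L_subset_closIter_one : L ⊆ closIter a L 1 := by
  intro s hs
  exact ⟨RTree.leaf a, rfl, .leaf (Or.inl ⟨rfl, Or.inl hs⟩)⟩

lemma L_concat_closIter {t s : RTree σ} (ht : t ∈ L) :
    ∀ {n : ℕ}, SubstRel (g a (closIter a L n)) t s → s ∈ closIter a L (n+1) := by
  intro n
  induction n generalizing s with
  | zero =>
    intro h
    have : s = t := substRel_id (fun b u hu => by
      rcases hu with ⟨hb, hu⟩ | ⟨hb, hu⟩
      · subst hb; rw [hu]; rfl
      · exact hu) h
    subst this
    exact L_subset_closIter_one ht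
  | succ n ih =>
    intro h
    obtain ⟨u, h1, h2⟩ := substRel_decomp (A := closIter a L n)
      (B := L ∪ {RTree.leaf a}) h
    exact ⟨u, ih h1, h2⟩

lemma L_concat_closure {t s : RTree σ} (ht : t ∈ L)
    (h : SubstRel (g a (concatClosure a L)) t s) : s ∈ concatClosure a L := by
  obtain ⟨n, hn⟩ := substRel_closure_exists h
  exact Set.mem_iUnion.2 ⟨n+1, L_concat_closIter ht hn⟩

lemma closure_concat_K {v w : RTree σ} (hv : v ∈ concatClosure a L)
    (h : SubstRel (g a (L ∪ {RTree.leaf a})) v w) : w ∈ concatClosure a L := by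
  obtain ⟨m, hm⟩ := Set.mem_iUnion.1 hv
  exact Set.mem_iUnion.2 ⟨m+1, v, hm, h⟩

lemma leaf_mem_closure_iff {b : σ 0} {ss : Fin 0 → RTree σ} :
    RTree.node b ss ∈ concatClosure a L ↔ b = a ∨ RTree.leaf b ∈ L := by
  constructor
  · intro h
    obtain ⟨n, hn⟩ := Set.mem_iUnion.1 h
    clear h
    induction n generalizing b ss with
    | zero =>
      left
      have h : RTree.node b ss = RTree.node a Fin.elim0 := hn
      injection h
    | succ n ih =>
      obtain ⟨t, ht, hsub⟩ := hn
      obtain ⟨b', ts', rfl, hm⟩ := substRel_to_leaf_inv hsub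
      rcases hm with ⟨hb', hmem⟩ | ⟨hb', heq⟩
      · rcases hmem with hmem | hmem
        · exact Or.inr hmem
        · left
          have h : RTree.node b Fin.elim0 = RTree.node a Fin.elim0 := hmem
          injection h
      · have hbb : b = b' := by
          have h : RTree.node b Fin.elim0 = RTree.node b' Fin.elim0 := heq
          injection h
        subst hbb
        rcases ih ht with h | h
        · exact absurd h hb'
        · exact Or.inr h
  · rintro (rfl | h)
    · rw [node_zero_eq_leaf]; exact leaf_mem_closure
    · refine Set.mem_iUnion.2 ⟨1, RTree.leaf a, rfl, ?_⟩
      rw [node_zero_eq_leaf]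
      exact .leaf (Or.inl ⟨rfl, Or.inl h⟩)
lemma node_succ_ne_node_zero {k : ℕ} {b : σ (k+1)} {ts : Fin (k+1) → RTree σ}
    {c : σ 0} {ss : Fin 0 → RTree σ} : RTree.node b ts ≠ RTree.node c ss := by
  intro h
  injection h with hk h1 h2
  omega

lemma substRel_refl_closure (t : RTree σ) :
    SubstRel (g a (concatClosure a L)) t t :=
  substRel_refl (fun b => by
    by_cases hb : b = a
    · subst hb; exact Or.inl ⟨rfl, leaf_mem_closure⟩
    · exact Or.inr ⟨hb, rfl⟩) t

lemma exists_node_rep {n k : ℕ} {b : σ (k+1)} {ss : Fin (k+1) → RTree σ}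
    (h : RTree.node b ss ∈ closIter a L n) :
    ∃ ts : Fin (k+1) → RTree σ, RTree.node b ts ∈ L ∧
      ∀ i, SubstRel (g a (concatClosure a L)) (ts i) (ss i) := by
  induction n generalizing ss with
  | zero => exact absurd h node_succ_ne_node_zero
  | succ n ih =>
    obtain ⟨u, hu, hsub⟩ := h
    cases hsub with
    | @leaf b' ts' _ hm =>
      rcases hm with ⟨hb', hmem⟩ | ⟨hb', heq⟩
      · rcases hmem with hmem | hmem
        · exact ⟨ss, hmem, fun i => substRel_refl_closure _⟩
        · exact absurd hmem node_succ_ne_node_zero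
      · exact absurd heq node_succ_ne_node_zero
    | @node k' b'' ts'' ss'' hm =>
      obtain ⟨ts, htsL, hts⟩ := ih hu
      refine ⟨ts, htsL, fun i => ?_⟩
      exact substRel_trans (fun v hv w hw => closure_concat_K hv hw) (hts i) (hm i)
lemma fin0_eq {Q : Type} (v w : Fin 0 → Q) : v = w := funext fun i => i.elim0

lemma node_zero_inj {b c : σ 0} {ts ss : Fin 0 → RTree σ}
    (h : RTree.node b ts = RTree.node c ss) : b = c := by injection h

variable {Q : Type} (M : DBUA σ Q)

lemma run_zero {b : σ 0} (ts : Fin 0 → RTree σ) (v : Fin 0 → Q) :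
    M.run (.node b ts) = M.δ 0 b v := by
  show M.δ 0 b _ = M.δ 0 b v
  exact congrArg _ (fin0_eq _ _)

/-- The powerset-with-flag automaton recognizing the concatenation closure. -/
def auto (a : σ 0) (M : DBUA σ Q) : DBUA σ (Set Q × Prop) where
  δ := fun k =>
    match k with
    | 0 => fun b _ =>
      let S₀ : Set Q := {q | ∃ v : Fin 0 → Q, q = M.δ 0 b v}
      let fl : Prop := b = a ∨ ∃ q ∈ S₀, q ∈ M.F
      ⟨S₀ ∪ {q | q = M.δ 0 a Fin.elim0 ∧ fl}, fl⟩
    | k+1 => fun b S =>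
      let S₀ : Set Q := {q | ∃ v : Fin (k+1) → Q,
        (∀ i, v i ∈ (S i).1) ∧ q = M.δ (k+1) b v}
      let fl : Prop := ∃ q ∈ S₀, q ∈ M.F
      ⟨S₀ ∪ {q | q = M.δ 0 a Fin.elim0 ∧ fl}, fl⟩
  F := {p | p.2}

theorem auto_run (hL : L = M.lang) (s : RTree σ) :
    ((auto a M).run s).1
        = {q | ∃ t, SubstRel (g a (concatClosure a L)) t s ∧ M.run t = q}
      ∧ (((auto a M).run s).2 ↔ s ∈ concatClosure a L) := by
  induction s with
  | @node k b ss ih =>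
    match k, b, ss, ih with
    | 0, b, ss, ih =>
      -- leaf case
      have hrun : (auto a M).run (.node b ss)
          = ⟨{q | ∃ v : Fin 0 → Q, q = M.δ 0 b v} ∪
              {q | q = M.δ 0 a Fin.elim0 ∧
                (b = a ∨ ∃ q ∈ {q | ∃ v : Fin 0 → Q, q = M.δ 0 b v}, q ∈ M.F)},
              b = a ∨ ∃ q ∈ {q | ∃ v : Fin 0 → Q, q = M.δ 0 b v}, q ∈ M.F⟩ := rfl
      rw [hrun]
      have hLF : ∀ v : Fin 0 → Q, (M.δ 0 b v ∈ M.F ↔ RTree.leaf b ∈ L) := by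
        intro v
        rw [hL]
        show _ ↔ M.run (RTree.node b Fin.elim0) ∈ M.F
        rw [run_zero M Fin.elim0 v]
      have hfl : (b = a ∨ ∃ q ∈ {q | ∃ v : Fin 0 → Q, q = M.δ 0 b v}, q ∈ M.F)
          ↔ RTree.node b ss ∈ concatClosure a L := by
        rw [leaf_mem_closure_iff]
        constructor
        · rintro (h | ⟨q, ⟨v, rfl⟩, hq⟩)
          · exact Or.inl h
          · exact Or.inr ((hLF v).1 hq)
        · rintro (h | h)
          · exact Or.inl h
          · exact Or.inr ⟨M.δ 0 b Fin.elim0, ⟨Fin.elim0, rfl⟩, (hLF Fin.elim0).2 h⟩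
      refine ⟨?_, hfl⟩
      ext q
      simp only [Set.mem_union, Set.mem_setOf_eq]
      constructor
      · rintro (⟨v, rfl⟩ | ⟨rfl, hfl'⟩)
        · refine ⟨RTree.leaf b, .leaf ?_, (run_zero M _ v).symm ▸ rfl⟩
          by_cases hb : b = a
          · subst hb
            exact Or.inl ⟨rfl, by rw [node_zero_eq_leaf]; exact leaf_mem_closure⟩
          · exact Or.inr ⟨hb, node_zero_eq_leaf b ss⟩
        · refine ⟨RTree.leaf a, .leaf (Or.inl ⟨rfl, hfl.1 hfl'⟩), ?_⟩
          exact run_zero M _ Fin.elim0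
      · rintro ⟨t, hsub, rfl⟩
        obtain ⟨b', ts', rfl, hm⟩ := substRel_to_leaf_inv hsub
        rcases hm with ⟨rfl, hmem⟩ | ⟨hb', heq⟩
        · right
          refine ⟨run_zero M ts' Fin.elim0, ?_⟩
          have hC : RTree.node b (Fin.elim0 : Fin 0 → RTree σ) ∈ concatClosure b' L := by
            rw [node_zero_eq_leaf]; exact hmem
          rcases leaf_mem_closure_iff.1 hC with h | h
          · exact Or.inl h
          · exact Or.inr ⟨M.δ 0 b Fin.elim0, ⟨Fin.elim0, rfl⟩, (hLF Fin.elim0).2 h⟩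
        · left
          have hbb : b = b' := node_zero_inj (ts := Fin.elim0) (ss := Fin.elim0) heq
          subst hbb
          exact ⟨fun i => M.run (ts' i), rfl⟩
    | k+1, b, ss, ih =>
      have hrun : (auto a M).run (.node b ss) =
          ⟨{q | ∃ v : Fin (k+1) → Q,
              (∀ i, v i ∈ ((auto a M).run (ss i)).1) ∧ q = M.δ (k+1) b v} ∪
            {q | q = M.δ 0 a Fin.elim0 ∧
              (∃ q ∈ {q | ∃ v : Fin (k+1) → Q,
                (∀ i, v i ∈ ((auto a M).run (ss i)).1) ∧ q = M.δ (k+1) b v}, q ∈ M.F)},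
           ∃ q ∈ {q | ∃ v : Fin (k+1) → Q,
              (∀ i, v i ∈ ((auto a M).run (ss i)).1) ∧ q = M.δ (k+1) b v}, q ∈ M.F⟩ := rfl
      have hS0 : {q | ∃ v : Fin (k+1) → Q,
            (∀ i, v i ∈ ((auto a M).run (ss i)).1) ∧ q = M.δ (k+1) b v}
          = {q | ∃ ts : Fin (k+1) → RTree σ,
              (∀ i, SubstRel (g a (concatClosure a L)) (ts i) (ss i)) ∧
                q = M.run (.node b ts)} := by
        ext q
        constructor
        · rintro ⟨v, hv, rfl⟩
          have hv' : ∀ i, ∃ t, SubstRel (g a (concatClosure a L)) t (ss i) ∧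
              M.run t = v i := fun i => by
            have := hv i
            rw [(ih i).1] at this
            exact this
          choose ts hsub hrt using hv'
          refine ⟨ts, hsub, ?_⟩
          show M.δ (k+1) b v = M.δ (k+1) b _
          exact congrArg _ (funext fun i => (hrt i).symm)
        · rintro ⟨ts, hsub, rfl⟩
          refine ⟨fun i => M.run (ts i), fun i => ?_, rfl⟩
          rw [(ih i).1]
          exact ⟨ts i, hsub i, rfl⟩
      rw [hrun, hS0]
      have hflC : (∃ q ∈ {q | ∃ ts : Fin (k+1) → RTree σ,
            (∀ i, SubstRel (g a (concatClosure a L)) (ts i) (ss i)) ∧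
              q = M.run (.node b ts)}, q ∈ M.F)
          ↔ RTree.node b ss ∈ concatClosure a L := by
        constructor
        · rintro ⟨q, ⟨ts, hsub, rfl⟩, hF⟩
          have htL : RTree.node b ts ∈ L := by rw [hL]; exact hF
          exact L_concat_closure htL (.node hsub)
        · intro hC
          obtain ⟨n, hn⟩ := Set.mem_iUnion.1 hC
          obtain ⟨ts, htL, hsub⟩ := exists_node_rep hn
          exact ⟨M.run (.node b ts), ⟨ts, hsub, rfl⟩, by rw [hL] at htL; exact htL⟩
      refine ⟨?_, hflC⟩
      ext q
      simp only [Set.mem_union, Set.mem_setOf_eq]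
      constructor
      · rintro (⟨ts, hsub, rfl⟩ | ⟨rfl, hfl'⟩)
        · exact ⟨RTree.node b ts, .node hsub, rfl⟩
        · refine ⟨RTree.leaf a, .leaf (Or.inl ⟨rfl, hflC.1 hfl'⟩), ?_⟩
          exact run_zero M _ Fin.elim0
      · rintro ⟨t, hsub, rfl⟩
        cases hsub with
        | @leaf b0 ts0 _ hm =>
          rcases hm with ⟨rfl, hC⟩ | ⟨hb0, heq⟩
          · exact Or.inr ⟨run_zero M ts0 Fin.elim0, hflC.2 hC⟩
          · exact absurd heq node_succ_ne_node_zero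
        | @node k' b0 ts0 ss0 hm =>
          exact Or.inl ⟨ts0, hm, rfl⟩
end TCC

/-- Theorem 3.41: the recognizable tree languages are closed under tree
concatenation closure. -/
theorem recognizable_closed_concatClosure {σ : ℕ → Type} (a : σ 0)
    (L : Set (RTree σ)) (hL : Recognizable L) :
    Recognizable (concatClosure a L) := by
  classical
  obtain ⟨Q, fQ, M, hLM⟩ := hL
  letI := fQ
  refine ⟨Set Q × Prop, inferInstance, TCC.auto a M, ?_⟩
  ext s
  have h := (TCC.auto_run (a := a) M hLM s).2
  show s ∈ concatClosure a L ↔ ((TCC.auto a M).run s).2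
  exact h.symm
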